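/- arXiv:0707.2144 — 2 statements merged into one kernel-verified Lean document; each statement's English description precedes it below -/
import Mathlib

section
/- For a separable Hilbert space H, the family of exponential vectors {φ_f : f ∈ H} is linearly independent in the Fock space Γ(H): if f_1, …, f_m ∈ H are distinct and Σ c_k φ_{f_k} = 0 with scalars c_k, then all c_k = 0. -/
/-!
Pick `u ∈ H` whose inner products with the finitely many `f_k` are pairwise distinct (possible
because a complex vector space is not a finite union of proper hyperplanes). Pairing
`Σ c_k φ_{f_k}` with `φ_{z̄ u}` gives `Σ c_k exp (z ⟪u, f_k⟫) = 0` for every `z ∈ ℂ`, and the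
functions `z ↦ exp (z b)` with distinct `b` are distinct characters of `(ℂ, +)`, hence linearly
independent by Dedekind's lemma.
-/

open scoped InnerProductSpace ComplexConjugate

open Function

theorem exists_injective_inner_left {𝕜 E ι : Type*} [RCLike 𝕜] [NormedAddCommGroup E]
    [InnerProductSpace 𝕜 E] [Finite ι] {f : ι → E} (hf : Injective f) :
    ∃ u : E, Injective fun i => ⟪u, f i⟫_𝕜 := by
  by_contra! h
  have hcover : ⋃ p : {p : ι × ι // p.1 ≠ p.2}, ((𝕜 ∙ (f p.1.1 - f p.1.2))ᗮ : Set E) =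
      Set.univ := by
    refine Set.eq_univ_of_forall fun u => ?_
    obtain ⟨i, j, hij, hne⟩ := not_injective_iff.mp (h u)
    refine Set.mem_iUnion.mpr ⟨⟨(i, j), hne⟩, ?_⟩
    exact Submodule.mem_orthogonal_singleton_iff_inner_left.mpr (by
      rw [inner_sub_right, sub_eq_zero]; exact hij)
  obtain ⟨⟨⟨i, j⟩, hne⟩, htop⟩ := Subspace.exists_eq_top_of_iUnion_eq_univ hcover
  have hself : ⟪f i - f j, f i - f j⟫_𝕜 = 0 :=
    Submodule.mem_orthogonal_singleton_iff_inner_left.mp (htop ▸ Submodule.mem_top)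
  exact hne (hf (sub_eq_zero.mp (inner_self_eq_zero.mp hself)))

theorem linearIndependent_cexp_mul :
    LinearIndependent ℂ fun b : ℂ => fun z : ℂ => Complex.exp (z * b) := by
  let χ : ℂ → Multiplicative ℂ →* ℂ := fun b =>
    { toFun := fun z => Complex.exp (z.toAdd * b)
      map_one' := by simp
      map_mul' := fun z w => by simp [add_mul, Complex.exp_add] }
  have hχ : Injective χ := by
    intro b b' hbb'
    by_contra hne
    have hsub : b - b' ≠ 0 := sub_ne_zero.mpr hne
    set z : ℂ := Real.pi * Complex.I / (b - b')
    have heq : Complex.exp (z * b) = Complex.exp (z * b') :=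
      DFunLike.congr_fun hbb' (Multiplicative.ofAdd z)
    -- `z (b - b') = π i`, and `exp (π i) = -1 ≠ 1`
    have hone : Complex.exp (Real.pi * Complex.I) = 1 := by
      rw [← div_mul_cancel₀ (Real.pi * Complex.I : ℂ) hsub, mul_sub, Complex.exp_sub, heq,
        div_self (Complex.exp_ne_zero _)]
    rw [Complex.exp_pi_mul_I] at hone
    norm_num at hone
  exact (linearIndependent_monoidHom (Multiplicative ℂ) ℂ).comp χ hχ

theorem linearIndependent_of_inner_eq_exp_inner {H F : Type*} [NormedAddCommGroup H]
    [InnerProductSpace ℂ H] [NormedAddCommGroup F] [InnerProductSpace ℂ F] {expVec : H → F}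
    (hexp : ∀ f g : H, ⟪expVec f, expVec g⟫_ℂ = Complex.exp ⟪f, g⟫_ℂ) :
    LinearIndependent ℂ expVec := by
  rw [linearIndependent_iff_finset_linearIndependent]
  intro s
  obtain ⟨u, hu⟩ := exists_injective_inner_left (𝕜 := ℂ) (Subtype.val_injective (p := (· ∈ s)))
  let T : F →ₗ[ℂ] ℂ → ℂ := LinearMap.pi fun z => (innerSL ℂ (expVec (conj z • u))).toLinearMap
  refine LinearIndependent.of_comp T ?_
  convert linearIndependent_cexp_mul.comp _ hu using 1
  ext k z
  simp [T, hexp, mul_comm]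

/- The Fock space enters only through a Hilbert space `F` and the map `expVec : H → F`,
constrained by `⟪φ_f, φ_g⟫ = exp ⟪f, g⟫`. -/
theorem stmt_1_general {H F : Type*} [NormedAddCommGroup H] [InnerProductSpace ℂ H]
    [NormedAddCommGroup F] [InnerProductSpace ℂ F]
    (expVec : H → F)
    (hexp : ∀ f g : H, ⟪expVec f, expVec g⟫_ℂ = Complex.exp ⟪f, g⟫_ℂ)
    (m : ℕ) (f : Fin m → H) (hf : Function.Injective f)
    (c : Fin m → ℂ) (hc : ∑ k, c k • expVec (f k) = 0) :
    ∀ k, c k = 0 :=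
  Fintype.linearIndependent_iff.mp ((linearIndependent_of_inner_eq_exp_inner hexp).comp f hf) c hc

theorem stmt_1 {H F : Type*} [NormedAddCommGroup H] [InnerProductSpace ℂ H]
    [CompleteSpace H] [TopologicalSpace.SeparableSpace H]
    [NormedAddCommGroup F] [InnerProductSpace ℂ F] [CompleteSpace F]
    (expVec : H → F)
    (hexp : ∀ f g : H, ⟪expVec f, expVec g⟫_ℂ = Complex.exp ⟪f, g⟫_ℂ)
    (m : ℕ) (f : Fin m → H) (hf : Function.Injective f)
    (c : Fin m → ℂ) (hc : ∑ k, c k • expVec (f k) = 0) :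
    ∀ k, c k = 0 :=
  stmt_1_general expVec hexp m f hf c hc
end

section
/- Let H = H_1 ⊕ H_2 be an orthogonal decomposition of a separable Hilbert space. Then there is a unitary isomorphism U : Γ(H) → Γ(H_1) ⊗ Γ(H_2) such that U φ_{f_1 ⊕ f_2} = φ_{f_1} ⊗ φ_{f_2} for all f_1 ∈ H_1, f_2 ∈ H_2 (exponential property of the Fock space). -/
/-!
Exponential vectors are total on both sides, and their Gram matrices agree:
⟪φ_{f₁ ⊕ f₂}, φ_{g₁ ⊕ g₂}⟫ = e^{⟪f₁, g₁⟫ + ⟪f₂, g₂⟫} = ⟪φ_{f₁} ⊗ φ_{f₂}, φ_{g₁} ⊗ φ_{g₂}⟫.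
Two total families in Hilbert spaces with the same Gram matrix are matched by a unitary:
sending ∑ cᵢ sᵢ to ∑ cᵢ tᵢ is well defined and isometric on the dense spans, and extends by
continuity.
-/

open scoped InnerProductSpace

open Finsupp in
theorem norm_linearCombination_eq_of_inner_eq {𝕜 ι E E' : Type*} [RCLike 𝕜]
    [NormedAddCommGroup E] [InnerProductSpace 𝕜 E]
    [NormedAddCommGroup E'] [InnerProductSpace 𝕜 E']
    {s : ι → E} {t : ι → E'} (h : ∀ i j, ⟪s i, s j⟫_𝕜 = ⟪t i, t j⟫_𝕜) (x : ι →₀ 𝕜) :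
    ‖linearCombination 𝕜 t x‖ = ‖linearCombination 𝕜 s x‖ := by
  have hinner : ⟪linearCombination 𝕜 s x, linearCombination 𝕜 s x⟫_𝕜
      = ⟪linearCombination 𝕜 t x, linearCombination 𝕜 t x⟫_𝕜 := by
    simp only [linearCombination_apply, Finsupp.sum, sum_inner, inner_sum, inner_smul_left,
      inner_smul_right, h]
  rw [norm_eq_sqrt_re_inner (𝕜 := 𝕜), norm_eq_sqrt_re_inner (𝕜 := 𝕜), hinner]

theorem denseRange_linearCombination_iff {R ι M : Type*} [Semiring R] [AddCommMonoid M]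
    [Module R M] [TopologicalSpace M] [ContinuousAdd M] [ContinuousConstSMul R M] (s : ι → M) :
    DenseRange (Finsupp.linearCombination R s)
      ↔ (Submodule.span R (Set.range s)).topologicalClosure = ⊤ := by
  rw [← Submodule.dense_iff_topologicalClosure_eq_top, ← Finsupp.range_linearCombination]
  rfl

open Finsupp in
theorem exists_linearIsometryEquiv_of_inner_eq {𝕜 ι E E' : Type*} [RCLike 𝕜]
    [NormedAddCommGroup E] [InnerProductSpace 𝕜 E] [CompleteSpace E]
    [NormedAddCommGroup E'] [InnerProductSpace 𝕜 E'] [CompleteSpace E']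
    {s : ι → E} {t : ι → E'} (h : ∀ i j, ⟪s i, s j⟫_𝕜 = ⟪t i, t j⟫_𝕜)
    (hs : (Submodule.span 𝕜 (Set.range s)).topologicalClosure = ⊤)
    (ht : (Submodule.span 𝕜 (Set.range t)).topologicalClosure = ⊤) :
    ∃ U : E ≃ₗᵢ[𝕜] E', ∀ i, U (s i) = t i := by
  have hs' := (denseRange_linearCombination_iff s).2 hs
  have ht' := (denseRange_linearCombination_iff t).2 ht
  have hnorm := norm_linearCombination_eq_of_inner_eq h
  -- `extendOfIsometry` does not need the dense maps to be injective, only to have equal norms.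
  refine ⟨(LinearEquiv.refl 𝕜 (ι →₀ 𝕜)).extendOfIsometry _ _ hs' ht' hnorm, fun i => ?_⟩
  simpa using (LinearEquiv.refl 𝕜 (ι →₀ 𝕜)).extendOfIsometry_eq (linearCombination 𝕜 s)
    (linearCombination 𝕜 t) hs' ht' hnorm (single i 1)

theorem stmt_15_general {H1 H2 F F1 F2 F12 : Type*}
    [NormedAddCommGroup H1] [InnerProductSpace ℂ H1]
    [NormedAddCommGroup H2] [InnerProductSpace ℂ H2]
    [NormedAddCommGroup F] [InnerProductSpace ℂ F] [CompleteSpace F]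
    [NormedAddCommGroup F1] [InnerProductSpace ℂ F1]
    [NormedAddCommGroup F2] [InnerProductSpace ℂ F2]
    [NormedAddCommGroup F12] [InnerProductSpace ℂ F12] [CompleteSpace F12]
    (expVec : WithLp 2 (H1 × H2) → F) (exp1 : H1 → F1) (exp2 : H2 → F2)
    (tp : F1 →L[ℂ] F2 →L[ℂ] F12)
    (hexp : ∀ f g : WithLp 2 (H1 × H2),
      ⟪expVec f, expVec g⟫_ℂ = Complex.exp ⟪f, g⟫_ℂ)
    (hexp1 : ∀ f g : H1, ⟪exp1 f, exp1 g⟫_ℂ = Complex.exp ⟪f, g⟫_ℂ)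
    (hexp2 : ∀ f g : H2, ⟪exp2 f, exp2 g⟫_ℂ = Complex.exp ⟪f, g⟫_ℂ)
    (htp : ∀ (a c : F1) (b d : F2), ⟪tp a b, tp c d⟫_ℂ = ⟪a, c⟫_ℂ * ⟪b, d⟫_ℂ)
    (htotal : (Submodule.span ℂ (Set.range expVec)).topologicalClosure = ⊤)
    (htotal12 : (Submodule.span ℂ
        {z : F12 | ∃ f1 f2, z = tp (exp1 f1) (exp2 f2)}).topologicalClosure = ⊤) :
    ∃ U : F ≃ₗᵢ[ℂ] F12, ∀ (f1 : H1) (f2 : H2),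
      U (expVec ((WithLp.equiv 2 (H1 × H2)).symm (f1, f2)))
        = tp (exp1 f1) (exp2 f2) := by
  have hgram : ∀ p q : H1 × H2,
      ⟪expVec (WithLp.toLp 2 p), expVec (WithLp.toLp 2 q)⟫_ℂ
        = ⟪tp (exp1 p.1) (exp2 p.2), tp (exp1 q.1) (exp2 q.2)⟫_ℂ := by
    intro p q
    rw [hexp, htp, hexp1, hexp2, ← Complex.exp_add, WithLp.prod_inner_apply]
  have hrange : Set.range (fun p : H1 × H2 => expVec (WithLp.toLp 2 p)) = Set.range expVec :=
    (WithLp.equiv 2 (H1 × H2)).symm.surjective.range_comp expVec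
  have hrange12 : Set.range (fun p : H1 × H2 => tp (exp1 p.1) (exp2 p.2))
      = {z : F12 | ∃ f1 f2, z = tp (exp1 f1) (exp2 f2)} := by
    ext z
    simp [eq_comm]
  obtain ⟨U, hU⟩ := exists_linearIsometryEquiv_of_inner_eq hgram
    (hrange ▸ htotal) (hrange12 ▸ htotal12)
  exact ⟨U, fun f1 f2 => hU (f1, f2)⟩

theorem stmt_15 {H1 H2 F F1 F2 F12 : Type*}
    [NormedAddCommGroup H1] [InnerProductSpace ℂ H1]
    [NormedAddCommGroup H2] [InnerProductSpace ℂ H2]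
    [NormedAddCommGroup F] [InnerProductSpace ℂ F] [CompleteSpace F]
    [NormedAddCommGroup F1] [InnerProductSpace ℂ F1] [CompleteSpace F1]
    [NormedAddCommGroup F2] [InnerProductSpace ℂ F2] [CompleteSpace F2]
    [NormedAddCommGroup F12] [InnerProductSpace ℂ F12] [CompleteSpace F12]
    (expVec : WithLp 2 (H1 × H2) → F) (exp1 : H1 → F1) (exp2 : H2 → F2)
    (tp : F1 →L[ℂ] F2 →L[ℂ] F12)
    (hexp : ∀ f g : WithLp 2 (H1 × H2),
      ⟪expVec f, expVec g⟫_ℂ = Complex.exp ⟪f, g⟫_ℂ)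
    (hexp1 : ∀ f g : H1, ⟪exp1 f, exp1 g⟫_ℂ = Complex.exp ⟪f, g⟫_ℂ)
    (hexp2 : ∀ f g : H2, ⟪exp2 f, exp2 g⟫_ℂ = Complex.exp ⟪f, g⟫_ℂ)
    (htp : ∀ (a c : F1) (b d : F2), ⟪tp a b, tp c d⟫_ℂ = ⟪a, c⟫_ℂ * ⟪b, d⟫_ℂ)
    (htotal : (Submodule.span ℂ (Set.range expVec)).topologicalClosure = ⊤)
    (htotal12 : (Submodule.span ℂ
        {z : F12 | ∃ f1 f2, z = tp (exp1 f1) (exp2 f2)}).topologicalClosure = ⊤) :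
    ∃ U : F ≃ₗᵢ[ℂ] F12, ∀ (f1 : H1) (f2 : H2),
      U (expVec ((WithLp.equiv 2 (H1 × H2)).symm (f1, f2)))
        = tp (exp1 f1) (exp2 f2) :=
  stmt_15_general expVec exp1 exp2 tp hexp hexp1 hexp2 htp htotal htotal12
end
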